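/- Let U, V be finite dimensional Lie algebras encoded by homological vector fields Q_U ∈ χ_1(U[1]) and Q_V ∈ χ_1(V[1]) on (U×V)[1], and let a linear map φ : U → V be encoded by the degree-0 vector field Φ determined by [Φ, ι_X] = ι_{φ(X)} for X ∈ U. Then φ is a morphism of Lie algebras (φ[X,Y]_U = [φX, φY]_V) if and only if [Q_U, Φ] + (1/2)[[Q_V, Φ], Φ] = 0. -/

import Mathlib

/-!
STATEMENT 10: Let `U, V` be finite dimensional Lie algebras, encoded by the homological
vector fields `Q_U, Q_V` on `(U×V)[1]`, and let a linear map `φ : U → V` be encoded by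
the degree-0 vector field `Φ` with `[Φ, ι_X] = ι_{φ(X)}`.  In the relevant (low) degrees
the vector fields are: `Q_U, Q_V` = bilinear maps `W → W → W` (`W = U × V`), `Φ` =
linear map `W → W`, and the Nijenhuis–Richardson bracket of a bilinear `B` with a
linear `A` is `[B,A](x,y) = B(Ax,y) + B(x,Ay) − A(B(x,y))`.  Then `φ` is a morphism of
Lie algebras iff `[Q_U, Φ] + (1/2)[[Q_V, Φ], Φ] = 0`.
-/

namespace Stmt10

variable (U V : Type) [LieRing U] [LieAlgebra ℝ U] [LieRing V] [LieAlgebra ℝ V]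

attribute [local instance 100] LieRing.ofAssociativeRing

/-- conjugation `E ↦ i ∘ E ∘ p` as a linear operation on endomorphisms. -/
noncomputable def conj {A : Type} [AddCommGroup A] [Module ℝ A]
    (i : A →ₗ[ℝ] U × V) (p : U × V →ₗ[ℝ] A) :
    (A →ₗ[ℝ] A) →ₗ[ℝ] (U × V →ₗ[ℝ] U × V) :=
  (LinearMap.llcomp ℝ (U × V) A (U × V) i) ∘ₗ (LinearMap.lcomp ℝ A p)

/-- the vector field `Q_U` encoding the Lie bracket of `U`, as the bilinear map
`(x, y) ↦ ι_U [x_U, y_U]` on `W = U × V`. -/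
noncomputable def QU : U × V →ₗ[ℝ] U × V →ₗ[ℝ] U × V :=
  (conj U V (LinearMap.inl ℝ U V) (LinearMap.fst ℝ U V)) ∘ₗ
    (LieAlgebra.ad ℝ U).toLinearMap ∘ₗ (LinearMap.fst ℝ U V)

/-- the vector field `Q_V` encoding the Lie bracket of `V`. -/
noncomputable def QV : U × V →ₗ[ℝ] U × V →ₗ[ℝ] U × V :=
  (conj U V (LinearMap.inr ℝ U V) (LinearMap.snd ℝ U V)) ∘ₗ
    (LieAlgebra.ad ℝ V).toLinearMap ∘ₗ (LinearMap.snd ℝ U V)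

/-- the degree-0 vector field `Φ` encoding the linear map `φ : U → V`. -/
noncomputable def Phi (φ : U →ₗ[ℝ] V) : U × V →ₗ[ℝ] U × V :=
  (LinearMap.inr ℝ U V) ∘ₗ φ ∘ₗ (LinearMap.fst ℝ U V)

/-- the Nijenhuis–Richardson bracket of a bilinear (degree 1) vector field `B` with a
linear (degree 0) vector field `A`: `[B,A](x,y) = B(Ax,y) + B(x,Ay) − A(B(x,y))`. -/
noncomputable def nrb (B : U × V →ₗ[ℝ] U × V →ₗ[ℝ] U × V) (A : U × V →ₗ[ℝ] U × V) :
    U × V →ₗ[ℝ] U × V →ₗ[ℝ] U × V :=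
  (B ∘ₗ A) + ((LinearMap.lcomp ℝ (U × V) A) ∘ₗ B)
    - ((LinearMap.llcomp ℝ (U × V) (U × V) (U × V) A) ∘ₗ B)

theorem lie_algebra_morphism_iff_maurer_cartan (φ : U →ₗ[ℝ] V) :
    nrb U V (QU U V) (Phi U V φ)
        + (2 : ℝ)⁻¹ • nrb U V (nrb U V (QV U V) (Phi U V φ)) (Phi U V φ) = 0
      ↔ ∀ x y : U, φ ⁅x, y⁆ = ⁅φ x, φ y⁆ := by
  have key : ∀ w w' : U × V,
      (nrb U V (QU U V) (Phi U V φ)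
        + (2 : ℝ)⁻¹ • nrb U V (nrb U V (QV U V) (Phi U V φ)) (Phi U V φ)) w w'
      = (0, ⁅φ w.1, φ w'.1⁆ - φ ⁅w.1, w'.1⁆) := by
    intro w w'
    simp [nrb, QU, QV, Phi, conj, Prod.ext_iff, smul_smul]
    module
  constructor
  · intro h x y
    have h2 := congrArg Prod.snd (h ▸ key (x, 0) (y, 0))
    simp at h2
    exact (sub_eq_zero.mp h2.symm).symm
  · intro h
    refine LinearMap.ext fun w => LinearMap.ext fun w' => ?_
    rw [key w w']
    simp [h w.1 w'.1]

end Stmt10
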